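/- arXiv:1907.00927 — 5 statements merged into one kernel-verified Lean document; each statement's English description precedes it below -/
import Mathlib

section
/- Let P be a real-valued distribution with mean μ, variance at most σ², and bounded 2k-th moments in the sense that E[(x-μ)^{2k}] ≤ C_{2k} σ^{2k}. Then for any event A with P(A) ≥ 1-ε ≥ 1/2, the conditional mean satisfies |E[x | A] - μ| ≤ 2 C_{2k}^{1/(2k)} σ ε^{1 - 1/(2k)}. -/
open MeasureTheory

/-!
Since `∫ (x - μ) ∂P = 0`, the shift `E[x | A] - μ` equals `-∫_{Aᶜ} (x - μ) ∂P / P(A)`.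
Hölder's inequality with exponent `2k`, applied against the indicator of `Aᶜ`, bounds
`∫_{Aᶜ} |x - μ| ∂P` by `(C σ^{2k})^{1/(2k)} P(Aᶜ)^{1 - 1/(2k)} ≤ C^{1/(2k)} σ ε^{1 - 1/(2k)}`,
and `P(A) ≥ 1/2` costs the factor `2`.
-/

section

variable {α : Type*} [MeasurableSpace α] {μ : Measure α} {s : Set α}

theorem setIntegral_norm_le_integral_norm_rpow_mul_measureReal_rpow {E : Type*}
    [NormedAddCommGroup E] {f : α → E} {p : ℝ} (hp : 1 < p)
    (hf : MemLp f (ENNReal.ofReal p) μ) (hs : MeasurableSet s) (hμs : μ s ≠ ⊤) :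
    ∫ x in s, ‖f x‖ ∂μ ≤ (∫ x, ‖f x‖ ^ p ∂μ) ^ (1 / p) * μ.real s ^ (1 - 1 / p) := by
  set q := p.conjExponent
  have hpq : p.HolderConjugate q := .conjExponent hp
  have hind : MemLp (s.indicator fun _ => (1 : ℝ)) (ENNReal.ofReal q) μ :=
    memLp_indicator_const _ hs 1 (.inr hμs)
  have hlhs : ∫ x in s, ‖f x‖ ∂μ = ∫ x, ‖f x‖ * ‖s.indicator (fun _ => (1 : ℝ)) x‖ ∂μ := by
    rw [← integral_indicator hs]
    congr 1 with x
    by_cases hx : x ∈ s <;> simp [hx]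
  have hind_rpow : ∫ x, ‖s.indicator (fun _ => (1 : ℝ)) x‖ ^ q ∂μ = μ.real s := by
    have : (fun x => ‖s.indicator (fun _ => (1 : ℝ)) x‖ ^ q) = s.indicator 1 := by
      ext x
      by_cases hx : x ∈ s <;> simp [hx, Real.zero_rpow hpq.symm.ne_zero]
    rw [this, integral_indicator_one hs]
  have hexp : 1 - 1 / p = 1 / q := by rw [one_div, one_div, hpq.one_sub_inv]
  rw [hlhs, ← hind_rpow, hexp]
  simpa only [norm_norm] using integral_mul_norm_le_Lp_mul_Lq hpq hf.norm hind

theorem norm_rpow_two_mul_natCast (y : ℝ) (k : ℕ) : ‖y‖ ^ (2 * k : ℝ) = y ^ (2 * k) := by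
  rw [Real.norm_eq_abs, ← (even_two_mul k).pow_abs, ← Real.rpow_natCast]
  push_cast
  rfl

theorem memLp_of_integrable_pow_two_mul {f : α → ℝ} {k : ℕ} (hk : k ≠ 0)
    (hf : AEStronglyMeasurable f μ) (hint : Integrable (fun x => f x ^ (2 * k)) μ) :
    MemLp f (ENNReal.ofReal (2 * k)) μ := by
  refine (integrable_norm_rpow_iff hf (by simp [hk]) ENNReal.ofReal_ne_top).mp ?_
  rw [ENNReal.toReal_ofReal (by positivity)]
  exact hint.congr (.of_forall fun x => (norm_rpow_two_mul_natCast (f x) k).symm)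

theorem setIntegral_abs_le_of_integral_pow_two_mul_le [IsFiniteMeasure μ] {f : α → ℝ} {k : ℕ}
    (hk : k ≠ 0) (hf : AEStronglyMeasurable f μ) (hint : Integrable (fun x => f x ^ (2 * k)) μ)
    {M ε : ℝ} (hM : ∫ x, f x ^ (2 * k) ∂μ ≤ M) (hs : MeasurableSet s) (hμs : μ.real s ≤ ε) :
    ∫ x in s, |f x| ∂μ ≤ M ^ (1 / (2 * k : ℝ)) * ε ^ (1 - 1 / (2 * k : ℝ)) := by
  have hp : 1 < 2 * (k : ℝ) := by norm_cast; omega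
  have hmoment_nonneg : 0 ≤ ∫ x, f x ^ (2 * k) ∂μ :=
    integral_nonneg fun x => (even_two_mul k).pow_nonneg _
  calc ∫ x in s, |f x| ∂μ
      ≤ (∫ x, ‖f x‖ ^ (2 * k : ℝ) ∂μ) ^ (1 / (2 * k : ℝ)) * μ.real s ^ (1 - 1 / (2 * k : ℝ)) :=
        setIntegral_norm_le_integral_norm_rpow_mul_measureReal_rpow hp
          (memLp_of_integrable_pow_two_mul hk hf hint) hs (measure_ne_top μ s)
    _ ≤ M ^ (1 / (2 * k : ℝ)) * ε ^ (1 - 1 / (2 * k : ℝ)) := by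
        simp_rw [norm_rpow_two_mul_natCast]
        have hexp : 0 ≤ 1 - 1 / (2 * k : ℝ) := by
          rw [sub_nonneg, div_le_one (by linarith)]
          linarith
        gcongr
        exact Real.rpow_nonneg (hmoment_nonneg.trans hM) _

theorem abs_setIntegral_div_sub_integral_le [IsProbabilityMeasure μ] {f : α → ℝ}
    (hf : Integrable f μ) (hs : MeasurableSet s) (hμs : μ.real s ≠ 0) :
    |(∫ x in s, f x ∂μ) / μ.real s - ∫ x, f x ∂μ| ≤
      (∫ x in sᶜ, |f x - ∫ y, f y ∂μ| ∂μ) / μ.real s := by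
  set m := ∫ y, f y ∂μ
  have hcentered : ∫ x in s, (f x - m) ∂μ + ∫ x in sᶜ, (f x - m) ∂μ = 0 := by
    rw [integral_add_compl (f := fun x => f x - m) hs (hf.sub (integrable_const m)),
      integral_sub hf (integrable_const m)]
    simp [m]
  have hshift : (∫ x in s, f x ∂μ) / μ.real s - m = -(∫ x in sᶜ, (f x - m) ∂μ) / μ.real s := by
    rw [integral_sub hf.integrableOn (integrable_const m)] at hcentered
    simp only [integral_const, MeasurableSet.univ, measureReal_restrict_apply, Set.univ_inter,
      smul_eq_mul] at hcentered
    field_simp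
    linarith
  rw [hshift, abs_div, abs_neg, abs_of_nonneg measureReal_nonneg]
  gcongr
  exact abs_integral_le_integral_abs

end

theorem conditional_mean_shift_1d_general
    (P : Measure ℝ) [IsProbabilityMeasure P]
    (μ σ C ε : ℝ) (k : ℕ) (hk : 1 ≤ k) (hσ : 0 ≤ σ) (hC : 0 ≤ C)
    (hint : Integrable id P)
    (hmean : ∫ x, x ∂P = μ)
    (hmom_int : Integrable (fun x => (x - μ) ^ (2 * k)) P)
    (hmom : ∫ x, (x - μ) ^ (2 * k) ∂P ≤ C * σ ^ (2 * k))
    (A : Set ℝ) (hA : MeasurableSet A)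
    (hε : ε ≤ 1 / 2)
    (hPA : 1 - ε ≤ (P A).toReal) :
    |(∫ x in A, x ∂P) / (P A).toReal - μ| ≤
      2 * C ^ ((1 : ℝ) / (2 * k)) * σ * ε ^ (1 - 1 / (2 * (k : ℝ))) := by
  have hk0 : k ≠ 0 := by omega
  have hPA_half : 1 / 2 ≤ P.real A := by rw [measureReal_def]; linarith
  have hPAc : P.real Aᶜ ≤ ε := by rw [measureReal_compl hA, probReal_univ, measureReal_def]; linarith
  have hroot : (C * σ ^ (2 * k)) ^ (1 / (2 * k : ℝ)) = C ^ (1 / (2 * k : ℝ)) * σ := by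
    rw [Real.mul_rpow hC (by positivity), one_div, ← Nat.cast_ofNat, ← Nat.cast_mul,
      Real.pow_rpow_inv_natCast hσ (by omega)]
  have htail : ∫ x in Aᶜ, |x - μ| ∂P ≤ C ^ (1 / (2 * k : ℝ)) * σ * ε ^ (1 - 1 / (2 * k : ℝ)) :=
    hroot ▸ setIntegral_abs_le_of_integral_pow_two_mul_le hk0 (by fun_prop) hmom_int hmom
      hA.compl hPAc
  calc |(∫ x in A, x ∂P) / (P A).toReal - μ|
      ≤ (∫ x in Aᶜ, |x - μ| ∂P) / P.real A := by
        simpa only [hmean, measureReal_def] using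
          abs_setIntegral_div_sub_integral_le (f := fun x => x) hint hA (by linarith)
    _ ≤ (C ^ (1 / (2 * k : ℝ)) * σ * ε ^ (1 - 1 / (2 * k : ℝ))) / (1 / 2) :=
        div_le_div₀ ((integral_nonneg fun _ => abs_nonneg _).trans htail) htail (by norm_num)
          hPA_half
    _ = 2 * C ^ ((1 : ℝ) / (2 * k)) * σ * ε ^ (1 - 1 / (2 * (k : ℝ))) := by ring

/-- Mean shift under conditioning, for a real distribution with bounded `2k`-th moments. -/
theorem conditional_mean_shift_1d
    (P : Measure ℝ) [IsProbabilityMeasure P]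
    (μ σ C ε : ℝ) (k : ℕ) (hk : 1 ≤ k) (hσ : 0 ≤ σ) (hC : 0 ≤ C)
    (hint : Integrable id P)
    (hmean : ∫ x, x ∂P = μ)
    (hmom_int : Integrable (fun x => (x - μ) ^ (2 * k)) P)
    (hmom : ∫ x, (x - μ) ^ (2 * k) ∂P ≤ C * σ ^ (2 * k))
    (A : Set ℝ) (hA : MeasurableSet A)
    (hε0 : 0 ≤ ε) (hε : ε ≤ 1 / 2)
    (hPA : 1 - ε ≤ (P A).toReal) :
    |(∫ x in A, x ∂P) / (P A).toReal - μ| ≤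
      2 * C ^ ((1 : ℝ) / (2 * k)) * σ * ε ^ (1 - 1 / (2 * (k : ℝ))) :=
  conditional_mean_shift_1d_general P μ σ C ε k hk hσ hC hint hmean hmom_int hmom A hA hε hPA
end

section
/- Let P be a distribution on ℝ^p with mean μ and covariance Σ, with bounded 2k-th directional moments: for all unit vectors v, E[(v^T(x-μ))^{2k}] ≤ C_{2k} (v^T Σ v)^k. Then for any event A with P(A) ≥ 1-ε ≥ 1/2, the conditional mean satisfies ‖E[x | A] - μ‖₂ ≤ 2 C_{2k}^{1/(2k)} ‖Σ‖₂^{1/2} ε^{1 - 1/(2k)}. -/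
/-!
Write `w = E[x | A] - μ`. Since `x - μ` has mean zero, `P(A) • w = ∫_A (x - μ) = -∫_{Aᶜ} (x - μ)`,
so `‖w‖ ≤ 2 ‖∫_{Aᶜ} (x - μ)‖`, and it suffices to bound `∫_{Aᶜ} |⟪v, x - μ⟫|` for unit `v`.
Hölder's inequality with exponents `2k` and `2k / (2k - 1)` bounds this by
`(E⟪v, x - μ⟫^{2k})^{1/(2k)} P(Aᶜ)^{1 - 1/(2k)} ≤ C^{1/(2k)} (vᵀ Σ v)^{1/2} ε^{1 - 1/(2k)}`,
and `vᵀ Σ v ≤ ‖Σ‖₂`.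
-/

open MeasureTheory

lemma integral_norm_le_integral_norm_rpow_mul_measureReal_univ
    {α E : Type*} [MeasurableSpace α] [NormedAddCommGroup E]
    {ν : Measure α} [IsFiniteMeasure ν] {f : α → E} {q : ℝ} (hq : 1 < q)
    (hf : AEStronglyMeasurable f ν) (hint : Integrable (fun x => ‖f x‖ ^ q) ν) :
    ∫ x, ‖f x‖ ∂ν ≤ (∫ x, ‖f x‖ ^ q ∂ν) ^ (1 / q) * ν.real Set.univ ^ (1 - 1 / q) := by
  have hpq := Real.HolderConjugate.conjExponent hq
  have hmem : MemLp f (ENNReal.ofReal q) ν := by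
    rw [← integrable_norm_rpow_iff hf (ENNReal.ofReal_pos.2 (by linarith)).ne'
      ENNReal.ofReal_ne_top, ENNReal.toReal_ofReal (by linarith)]
    exact hint
  have hholder := integral_mul_norm_le_Lp_mul_Lq hpq hmem.norm
    (memLp_const (1 : ℝ) : MemLp (fun _ : α => (1 : ℝ)) _ ν)
  simpa [one_div, hpq.one_sub_inv] using hholder

lemma setIntegral_abs_le_of_integral_pow_le
    {Ω : Type*} [MeasurableSpace Ω] {P : Measure Ω} [IsFiniteMeasure P]
    {f : Ω → ℝ} {k : ℕ} (hk : 1 ≤ k) (hf : AEStronglyMeasurable f P)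
    (hint : Integrable (fun x => f x ^ (2 * k)) P) {D : ℝ} (hD : ∫ x, f x ^ (2 * k) ∂P ≤ D)
    {s : Set Ω} {ε : ℝ} (hs : P.real s ≤ ε) :
    ∫ x in s, |f x| ∂P ≤ D ^ (1 / (2 * k : ℝ)) * ε ^ (1 - 1 / (2 * k : ℝ)) := by
  have hk' : (1 : ℝ) ≤ k := by exact_mod_cast hk
  have hpow : ∀ x, |f x| ^ (2 * k : ℝ) = f x ^ (2 * k) := fun x => by
    rw [← Nat.cast_ofNat, ← Nat.cast_mul, Real.rpow_natCast, Even.pow_abs (even_two_mul k)]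
  have hholder := integral_norm_le_integral_norm_rpow_mul_measureReal_univ (q := 2 * k)
    (by linarith) hf.restrict
    (hint.restrict.congr (.of_forall fun x => (hpow x).symm) : Integrable _ (P.restrict s))
  simp only [Real.norm_eq_abs, hpow, measureReal_restrict_apply_univ] at hholder
  have hpow_nonneg : ∀ x, 0 ≤ f x ^ (2 * k) := fun x => (even_two_mul k).pow_nonneg _
  have hmoment_nonneg : 0 ≤ ∫ x in s, f x ^ (2 * k) ∂P := integral_nonneg hpow_nonneg
  have hmoment : ∫ x in s, f x ^ (2 * k) ∂P ≤ D :=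
    (setIntegral_le_integral hint (.of_forall hpow_nonneg)).trans hD
  refine hholder.trans (mul_le_mul ?_ ?_ (by positivity) ?_)
  · exact Real.rpow_le_rpow hmoment_nonneg hmoment (by positivity)
  · refine Real.rpow_le_rpow measureReal_nonneg hs ?_
    rw [sub_nonneg, div_le_one (by positivity)]
    linarith
  · exact Real.rpow_nonneg (hmoment_nonneg.trans hmoment) _

lemma norm_le_of_forall_norm_eq_one_inner_le {E : Type*} [NormedAddCommGroup E]
    [InnerProductSpace ℝ E] (y : E) {B : ℝ} (hB : 0 ≤ B)
    (h : ∀ v : E, ‖v‖ = 1 → inner ℝ v y ≤ B) : ‖y‖ ≤ B := by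
  rcases eq_or_ne y 0 with rfl | hy
  · simpa using hB
  have hy' : 0 < ‖y‖ := norm_pos_iff.mpr hy
  convert h (‖y‖⁻¹ • y) (by simp [norm_smul, hy'.ne']) using 1
  rw [real_inner_smul_left, real_inner_self_eq_norm_sq]
  field_simp

lemma norm_integral_le_of_forall_norm_eq_one {α E : Type*} [MeasurableSpace α]
    [NormedAddCommGroup E] [InnerProductSpace ℝ E] [CompleteSpace E] {ν : Measure α}
    {g : α → E} (hg : Integrable g ν) {B : ℝ} (hB : 0 ≤ B)
    (h : ∀ v : E, ‖v‖ = 1 → ∫ x, |inner ℝ v (g x)| ∂ν ≤ B) : ‖∫ x, g x ∂ν‖ ≤ B := by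
  refine norm_le_of_forall_norm_eq_one_inner_le _ hB fun v hv => ?_
  rw [← integral_inner hg]
  exact (le_abs_self _).trans (abs_integral_le_integral_abs.trans (h v hv))

lemma Matrix.abs_sum_sum_mul_mul_le_norm_toEuclideanCLM {n : Type*} [Fintype n] [DecidableEq n]
    (M : Matrix n n ℝ) (v : EuclideanSpace ℝ n) :
    |∑ a, ∑ b, v a * M a b * v b| ≤ ‖Matrix.toEuclideanCLM (𝕜 := ℝ) M‖ * ‖v‖ ^ 2 := by
  have hquad : ∑ a, ∑ b, v a * M a b * v b = inner ℝ v (Matrix.toEuclideanCLM (𝕜 := ℝ) M v) := by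
    simp [PiLp.inner_apply, Matrix.ofLp_toEuclideanCLM, Matrix.mulVec, dotProduct,
      Finset.mul_sum, mul_comm, mul_left_comm, mul_assoc]
  rw [hquad]
  calc _ ≤ ‖v‖ * ‖Matrix.toEuclideanCLM (𝕜 := ℝ) M v‖ := abs_real_inner_le_norm _ _
    _ ≤ ‖v‖ * (‖Matrix.toEuclideanCLM (𝕜 := ℝ) M‖ * ‖v‖) := by
      gcongr
      exact ContinuousLinearMap.le_opNorm _ _
    _ = _ := by ring

lemma inv_smul_setIntegral_sub_integral_eq {Ω E : Type*} [MeasurableSpace Ω]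
    [NormedAddCommGroup E] [NormedSpace ℝ E] [CompleteSpace E]
    {P : Measure Ω} [IsProbabilityMeasure P]
    {X : Ω → E} (hX : Integrable X P) {A : Set Ω} (hA : MeasurableSet A) (hPA : P.real A ≠ 0) :
    (P.real A)⁻¹ • ∫ x in A, X x ∂P - ∫ x, X x ∂P =
      -(P.real A)⁻¹ • ∫ x in Aᶜ, (X x - ∫ y, X y ∂P) ∂P := by
  set m := ∫ y, X y ∂P
  have hXm : Integrable (fun x => X x - m) P := hX.sub (integrable_const m)
  have hsplit : ∫ x in A, (X x - m) ∂P + ∫ x in Aᶜ, (X x - m) ∂P = 0 := by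
    rw [integral_add_compl hA hXm, integral_sub hX (integrable_const m), integral_const,
      probReal_univ, one_smul, sub_self]
  rw [neg_smul, ← smul_neg, ← eq_neg_of_add_eq_zero_left hsplit,
    integral_sub hX.integrableOn (integrable_const m), setIntegral_const, smul_sub, smul_smul,
    inv_mul_cancel₀ hPA, one_smul]

theorem conditional_mean_shift_multivariate_general
    (p k : ℕ) (hk : 1 ≤ k)
    (P : Measure (EuclideanSpace ℝ (Fin p))) [IsProbabilityMeasure P]
    (μ : EuclideanSpace ℝ (Fin p)) (Cov : Matrix (Fin p) (Fin p) ℝ)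
    (C ε : ℝ) (hC : 0 ≤ C)
    (hint : Integrable id P)
    (hmean : ∫ x, x ∂P = μ)
    (hmom_int : ∀ v : EuclideanSpace ℝ (Fin p), ‖v‖ = 1 →
      Integrable (fun x => (inner ℝ v (x - μ) : ℝ) ^ (2 * k)) P)
    (hmom : ∀ v : EuclideanSpace ℝ (Fin p), ‖v‖ = 1 →
      (∫ x, (inner ℝ v (x - μ) : ℝ) ^ (2 * k) ∂P) ≤
        C * (∑ a, ∑ b, v a * Cov a b * v b) ^ k)
    (A : Set (EuclideanSpace ℝ (Fin p))) (hA : MeasurableSet A)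
    (hε : ε ≤ 1 / 2)
    (hPA : 1 - ε ≤ (P A).toReal) :
    ‖(P A).toReal⁻¹ • (∫ x in A, x ∂P) - μ‖ ≤
      2 * C ^ ((1 : ℝ) / (2 * k)) *
        ‖Matrix.toEuclideanCLM (𝕜 := ℝ) Cov‖ ^ ((1 : ℝ) / 2) *
        ε ^ (1 - 1 / (2 * (k : ℝ))) := by
  set M := Matrix.toEuclideanCLM (𝕜 := ℝ) Cov
  rw [← measureReal_def] at hPA ⊢
  have hε0 : 0 ≤ ε := by linarith [measureReal_le_one (μ := P) (s := A)]
  have hAc : P.real Aᶜ ≤ ε := by rw [probReal_compl_eq_one_sub hA]; linarith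
  have hPA_inv : (P.real A)⁻¹ ≤ 2 := inv_le_of_inv_le₀ (by norm_num) (by linarith)
  have hcentered : Integrable (fun x => x - μ) P := hint.sub (integrable_const μ)
  have hmoment : ∀ v : EuclideanSpace ℝ (Fin p), ‖v‖ = 1 →
      ∫ x, inner ℝ v (x - μ) ^ (2 * k) ∂P ≤ C * ‖M‖ ^ k := fun v hv => by
    have hquad := Matrix.abs_sum_sum_mul_mul_le_norm_toEuclideanCLM Cov v
    rw [hv, one_pow, mul_one] at hquad
    refine (hmom v hv).trans (mul_le_mul_of_nonneg_left ?_ hC)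
    exact (le_abs_self _).trans ((abs_pow _ k).trans_le (pow_le_pow_left₀ (abs_nonneg _) hquad k))
  have hroot : (C * ‖M‖ ^ k) ^ (1 / (2 * k : ℝ)) =
      C ^ ((1 : ℝ) / (2 * k)) * ‖M‖ ^ ((1 : ℝ) / 2) := by
    rw [Real.mul_rpow hC (by positivity), ← Real.rpow_natCast, ← Real.rpow_mul (norm_nonneg _)]
    congr 2
    field_simp
  have htail : ‖∫ x in Aᶜ, (x - μ) ∂P‖ ≤
      C ^ ((1 : ℝ) / (2 * k)) * ‖M‖ ^ ((1 : ℝ) / 2) * ε ^ (1 - 1 / (2 * (k : ℝ))) := by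
    refine norm_integral_le_of_forall_norm_eq_one hcentered.integrableOn (by positivity)
      fun v hv => ?_
    rw [← hroot]
    exact setIntegral_abs_le_of_integral_pow_le hk (hcentered.const_inner v).aestronglyMeasurable
      (hmom_int v hv) (hmoment v hv) hAc
  rw [← hmean, inv_smul_setIntegral_sub_integral_eq (X := fun x => x) hint hA (by linarith),
    norm_smul, hmean, norm_neg, Real.norm_of_nonneg (inv_nonneg.2 measureReal_nonneg)]
  calc _ ≤ 2 * (C ^ ((1 : ℝ) / (2 * k)) * ‖M‖ ^ ((1 : ℝ) / 2) * ε ^ (1 - 1 / (2 * (k : ℝ)))) :=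
        mul_le_mul hPA_inv htail (norm_nonneg _) (by norm_num)
    _ = _ := by ring

/-- Mean shift under conditioning, for a multivariate distribution with bounded
`2k`-th directional moments. -/
theorem conditional_mean_shift_multivariate
    (p k : ℕ) (hk : 1 ≤ k)
    (P : Measure (EuclideanSpace ℝ (Fin p))) [IsProbabilityMeasure P]
    (μ : EuclideanSpace ℝ (Fin p)) (Cov : Matrix (Fin p) (Fin p) ℝ)
    (C ε : ℝ) (hC : 0 ≤ C)
    (hint : Integrable id P)
    (hmean : ∫ x, x ∂P = μ)
    (hmom_int : ∀ v : EuclideanSpace ℝ (Fin p), ‖v‖ = 1 →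
      Integrable (fun x => (inner ℝ v (x - μ) : ℝ) ^ (2 * k)) P)
    (hmom : ∀ v : EuclideanSpace ℝ (Fin p), ‖v‖ = 1 →
      (∫ x, (inner ℝ v (x - μ) : ℝ) ^ (2 * k) ∂P) ≤
        C * (∑ a, ∑ b, v a * Cov a b * v b) ^ k)
    (A : Set (EuclideanSpace ℝ (Fin p))) (hA : MeasurableSet A)
    (hε0 : 0 ≤ ε) (hε : ε ≤ 1 / 2)
    (hPA : 1 - ε ≤ (P A).toReal) :
    ‖(P A).toReal⁻¹ • (∫ x in A, x ∂P) - μ‖ ≤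
      2 * C ^ ((1 : ℝ) / (2 * k)) *
        ‖Matrix.toEuclideanCLM (𝕜 := ℝ) Cov‖ ^ ((1 : ℝ) / 2) *
        ε ^ (1 - 1 / (2 * (k : ℝ))) :=
  conditional_mean_shift_multivariate_general p k hk P μ Cov C ε hC hint hmean hmom_int hmom A hA hε
    hPA
end

section
/- Let x be a random vector in ℝ^p with mean μ and covariance Σ, satisfying the bounded fourth moment condition: for all unit vectors v, E[(v^T(x-μ))⁴] ≤ C (v^T Σ v)². Then E[‖x-μ‖₂⁴] ≤ C (tr Σ)². -/
/-!
Writing `‖x - μ‖⁴ = (∑ᵢ (xᵢ - μᵢ)²)²`, Minkowski's inequality in `L²` for the functions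
`(xᵢ - μᵢ)²` bounds `E‖x - μ‖⁴` by `(∑ᵢ √E(xᵢ - μᵢ)⁴)²`. The moment hypothesis in the coordinate
directions gives `√E(xᵢ - μᵢ)⁴ ≤ √C Σᵢᵢ`, and summing over `i` yields `√C tr Σ`.
-/

open MeasureTheory Finset

section

variable {Ω ι : Type*} [MeasurableSpace Ω] {μ : Measure Ω}

theorem integral_mul_le_sqrt_integral_sq_mul_sqrt_integral_sq {f g : Ω → ℝ}
    (hf : MemLp f 2 μ) (hg : MemLp g 2 μ) :
    ∫ x, f x * g x ∂μ ≤ √(∫ x, f x ^ 2 ∂μ) * √(∫ x, g x ^ 2 ∂μ) := by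
  have hHolder := integral_mul_norm_le_Lp_mul_Lq (μ := μ) Real.HolderConjugate.two_two
    (by simpa using hf) (by simpa using hg)
  simp only [Real.rpow_two, Real.norm_eq_abs, sq_abs, ← Real.sqrt_eq_rpow] at hHolder
  calc ∫ x, f x * g x ∂μ ≤ ‖∫ x, f x * g x ∂μ‖ := le_abs_self _
    _ ≤ ∫ x, ‖f x * g x‖ ∂μ := norm_integral_le_integral_norm _
    _ ≤ _ := by simpa only [norm_mul, Real.norm_eq_abs] using hHolder

theorem integral_sq_sum_le_sq_sum_sqrt_integral_sq (s : Finset ι) {g : ι → Ω → ℝ}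
    (hg : ∀ i ∈ s, MemLp (g i) 2 μ) :
    ∫ x, (∑ i ∈ s, g i x) ^ 2 ∂μ ≤ (∑ i ∈ s, √(∫ x, g i x ^ 2 ∂μ)) ^ 2 := by
  have hint : ∀ i ∈ s, ∀ j ∈ s, Integrable (fun x => g i x * g j x) μ := fun i hi j hj =>
    (hg i hi).integrable_mul (hg j hj)
  simp only [sq (∑ i ∈ s, _), sum_mul_sum]
  rw [integral_finsetSum _ fun i hi => integrable_finsetSum _ (hint i hi)]
  refine sum_le_sum fun i hi => ?_
  rw [integral_finsetSum _ (hint i hi)]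
  exact sum_le_sum fun j hj =>
    integral_mul_le_sqrt_integral_sq_mul_sqrt_integral_sq (hg i hi) (hg j hj)

end

theorem sq_sum_sqrt_le_mul_sq_sum {ι : Type*} (s : Finset ι) {a b : ι → ℝ} {C : ℝ} (hC : 0 ≤ C)
    (hb : ∀ i ∈ s, 0 ≤ b i) (hab : ∀ i ∈ s, a i ≤ C * b i ^ 2) :
    (∑ i ∈ s, √(a i)) ^ 2 ≤ C * (∑ i ∈ s, b i) ^ 2 := by
  have hsqrt : ∀ i ∈ s, √(a i) ≤ √C * b i := fun i hi => by
    simpa [Real.sqrt_mul hC, Real.sqrt_sq (hb i hi)] using Real.sqrt_le_sqrt (hab i hi)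
  calc (∑ i ∈ s, √(a i)) ^ 2 ≤ (√C * ∑ i ∈ s, b i) ^ 2 := by
        rw [mul_sum]
        exact pow_le_pow_left₀ (sum_nonneg fun i _ => Real.sqrt_nonneg _) (sum_le_sum hsqrt) 2
    _ = C * (∑ i ∈ s, b i) ^ 2 := by rw [mul_pow, Real.sq_sqrt hC]

theorem EuclideanSpace.sum_single_mul_mul_single {n : Type*} [Fintype n] [DecidableEq n]
    (M : Matrix n n ℝ) (i : n) :
    ∑ a, ∑ b, EuclideanSpace.single i (1 : ℝ) a * M a b * EuclideanSpace.single i (1 : ℝ) b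
      = M i i := by
  simp [PiLp.single_apply]

theorem fourth_moment_norm_bound_general
    (p : ℕ)
    (P : Measure (EuclideanSpace ℝ (Fin p)))
    (μ : EuclideanSpace ℝ (Fin p)) (Cov : Matrix (Fin p) (Fin p) ℝ)
    (C : ℝ) (hC : 0 < C)
    (hCov : ∀ a b, Cov a b = ∫ x, (x a - μ a) * (x b - μ b) ∂P)
    (hdir_int : ∀ v : EuclideanSpace ℝ (Fin p), ‖v‖ = 1 →
      Integrable (fun x => (inner ℝ v (x - μ) : ℝ) ^ 4) P)
    (hmom : ∀ v : EuclideanSpace ℝ (Fin p), ‖v‖ = 1 →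
      (∫ x, (inner ℝ v (x - μ) : ℝ) ^ 4 ∂P) ≤
        C * (∑ a, ∑ b, v a * Cov a b * v b) ^ 2) :
    (∫ x, ‖x - μ‖ ^ 4 ∂P) ≤ C * Cov.trace ^ 2 := by
  have hunit : ∀ i : Fin p, ‖EuclideanSpace.single i (1 : ℝ)‖ = 1 := by simp
  have hcoord : ∀ i (x : EuclideanSpace ℝ (Fin p)),
      (inner ℝ (EuclideanSpace.single i (1 : ℝ)) (x - μ) : ℝ) ^ 4 = ((x i - μ i) ^ 2) ^ 2 := by
    intro i x
    rw [EuclideanSpace.inner_single_left]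
    simp only [map_one, one_mul, PiLp.sub_apply]
    ring
  have hL2 : ∀ i, MemLp (fun x : EuclideanSpace ℝ (Fin p) => (x i - μ i) ^ 2) 2 P := fun i =>
    (memLp_two_iff_integrable_sq (by fun_prop)).2 <| by
      simpa only [hcoord] using hdir_int _ (hunit i)
  have hfourth : ∀ i, ∫ x, ((x i - μ i) ^ 2) ^ 2 ∂P ≤ C * Cov i i ^ 2 := fun i => by
    simpa only [hcoord, EuclideanSpace.sum_single_mul_mul_single] using hmom _ (hunit i)
  have hvar : ∀ i, 0 ≤ Cov i i := fun i => by
    rw [hCov]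
    exact integral_nonneg fun x => mul_self_nonneg _
  calc ∫ x, ‖x - μ‖ ^ 4 ∂P = ∫ x, (∑ i, (x i - μ i) ^ 2) ^ 2 ∂P := by
        simp only [← PiLp.sub_apply, ← EuclideanSpace.real_norm_sq_eq, ← pow_mul]
    _ ≤ (∑ i, √(∫ x, ((x i - μ i) ^ 2) ^ 2 ∂P)) ^ 2 :=
        integral_sq_sum_le_sq_sum_sqrt_integral_sq _ fun i _ => hL2 i
    _ ≤ C * Cov.trace ^ 2 :=
        sq_sum_sqrt_le_mul_sq_sum _ hC.le (fun i _ => hvar i) fun i _ => hfourth i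

/-- Bounded directional fourth moments imply a bounded fourth moment of the norm:
`E‖x-μ‖₂⁴ ≤ C (tr Σ)²`. -/
theorem fourth_moment_norm_bound
    (p : ℕ)
    (P : Measure (EuclideanSpace ℝ (Fin p))) [IsProbabilityMeasure P]
    (μ : EuclideanSpace ℝ (Fin p)) (Cov : Matrix (Fin p) (Fin p) ℝ)
    (C : ℝ) (hC : 0 < C)
    (hint : Integrable id P)
    (hmean : ∫ x, x ∂P = μ)
    (hCov : ∀ a b, Cov a b = ∫ x, (x a - μ a) * (x b - μ b) ∂P)
    (hmom_int : Integrable (fun x => ‖x - μ‖ ^ 4) P)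
    (hdir_int : ∀ v : EuclideanSpace ℝ (Fin p), ‖v‖ = 1 →
      Integrable (fun x => (inner ℝ v (x - μ) : ℝ) ^ 4) P)
    (hmom : ∀ v : EuclideanSpace ℝ (Fin p), ‖v‖ = 1 →
      (∫ x, (inner ℝ v (x - μ) : ℝ) ^ 4 ∂P) ≤
        C * (∑ a, ∑ b, v a * Cov a b * v b) ^ 2) :
    (∫ x, ‖x - μ‖ ^ 4 ∂P) ≤ C * Cov.trace ^ 2 :=
  fourth_moment_norm_bound_general p P μ Cov C hC hCov hdir_int hmom
end

section
/- Let P₁ and P₂ be two discrete probability distributions supported on a finite collection of points in ℝ^p, with means μ₁, μ₂ and covariance matrices Σ₁, Σ₂. If the total variation distance satisfies TV(P₁,P₂) < 1, then ‖μ₁ - μ₂‖₂ ≤ (√TV(P₁,P₂)/(1 - √TV(P₁,P₂))) (‖Σ₁‖₂^{1/2} + ‖Σ₂‖₂^{1/2}). -/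
/-!
Split `P₁` and `P₂` into their common part `min P₁ P₂` and residuals of mass `ρ ≤ TV`; this is
the maximal coupling. Along the unit direction `v` of `μ₁ - μ₂` the common part cancels from the
difference of means, so `(1 - ρ) ‖μ₁ - μ₂‖` is the difference of the two residuals' moments of
`⟪v, x - μᵢ⟫`. By Cauchy–Schwarz each is at most `√ρ · √(vᵀ Σᵢ v) ≤ √ρ · ‖Σᵢ‖^{1/2}`, and
`ρ ≤ TV ≤ √TV` finishes.
-/

open MeasureTheory

/-- Total variation distance between two probability measures, as the supremum over
sets of the discrepancy of the probabilities. -/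
noncomputable def tvDist {E : Type*} [MeasurableSpace E] (P Q : Measure E) : ℝ :=
  ⨆ s : Set E, |(P s).toReal - (Q s).toReal|

open Finset
open scoped RealInnerProductSpace

/-- The mass that a maximal coupling of the weights `q₁`, `q₂` moves off the diagonal. -/
def excessMass {ι : Type*} (s : Finset ι) (q₁ q₂ : ι → ℝ) : ℝ :=
  ∑ x ∈ s, (q₁ x - min (q₁ x) (q₂ x))

section WeightedSums

variable {ι : Type*} {s : Finset ι}

theorem abs_sum_mul_le_sqrt_mul_sqrt {r : ι → ℝ} (hr : ∀ x ∈ s, 0 ≤ r x) (c : ι → ℝ) :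
    |∑ x ∈ s, r x * c x| ≤ √(∑ x ∈ s, r x) * √(∑ x ∈ s, r x * c x ^ 2) := by
  rw [← Real.sqrt_mul (sum_nonneg hr), ← Real.sqrt_sq_eq_abs]
  exact Real.sqrt_le_sqrt (sum_sq_le_sum_mul_sum_of_sq_le_mul s hr
    (fun x hx => mul_nonneg (hr x hx) (sq_nonneg _)) fun x _ => le_of_eq (by ring))

theorem abs_sum_mul_le_of_le {r q : ι → ℝ} (hr : ∀ x ∈ s, 0 ≤ r x) (hrq : ∀ x ∈ s, r x ≤ q x)
    (c : ι → ℝ) :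
    |∑ x ∈ s, r x * c x| ≤ √(∑ x ∈ s, r x) * √(∑ x ∈ s, q x * c x ^ 2) := by
  refine (abs_sum_mul_le_sqrt_mul_sqrt hr c).trans ?_
  gcongr with x hx
  exact hrq x hx

variable {q₁ q₂ : ι → ℝ}

theorem excessMass_comm (hq : ∑ x ∈ s, q₁ x = ∑ x ∈ s, q₂ x) :
    excessMass s q₂ q₁ = excessMass s q₁ q₂ := by
  simp only [excessMass, sum_sub_distrib, hq, min_comm]

/-- The common part `min q₁ q₂` cancels from the difference of means. -/
theorem one_sub_excessMass_mul_sub_eq (hq : ∑ x ∈ s, q₁ x = ∑ x ∈ s, q₂ x) (f : ι → ℝ) :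
    (1 - excessMass s q₁ q₂) * (∑ x ∈ s, q₁ x * f x - ∑ x ∈ s, q₂ x * f x) =
      ∑ x ∈ s, (q₁ x - min (q₁ x) (q₂ x)) * (f x - ∑ y ∈ s, q₁ y * f y) -
        ∑ x ∈ s, (q₂ x - min (q₂ x) (q₁ x)) * (f x - ∑ y ∈ s, q₂ y * f y) := by
  simp only [excessMass, mul_sub, sum_sub_distrib, ← sum_mul, sub_mul, hq, min_comm (q₂ _)]
  ring

theorem sum_sub_min_mul_abs_le (hq₁ : ∀ x ∈ s, 0 ≤ q₁ x) (hq₂ : ∀ x ∈ s, 0 ≤ q₂ x) (f : ι → ℝ) :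
    |∑ x ∈ s, (q₁ x - min (q₁ x) (q₂ x)) * f x| ≤
      √(excessMass s q₁ q₂) * √(∑ x ∈ s, q₁ x * f x ^ 2) :=
  abs_sum_mul_le_of_le (fun _ _ => sub_nonneg.2 (min_le_left _ _))
    (fun x hx => sub_le_self _ (le_min (hq₁ x hx) (hq₂ x hx))) f

theorem one_sub_excessMass_mul_abs_sub_le (hq₁ : ∀ x ∈ s, 0 ≤ q₁ x) (hq₂ : ∀ x ∈ s, 0 ≤ q₂ x)
    (hq : ∑ x ∈ s, q₁ x = ∑ x ∈ s, q₂ x) (f : ι → ℝ) :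
    (1 - excessMass s q₁ q₂) * |∑ x ∈ s, q₁ x * f x - ∑ x ∈ s, q₂ x * f x| ≤
      √(excessMass s q₁ q₂) *
        (√(∑ x ∈ s, q₁ x * (f x - ∑ y ∈ s, q₁ y * f y) ^ 2) +
          √(∑ x ∈ s, q₂ x * (f x - ∑ y ∈ s, q₂ y * f y) ^ 2)) := by
  calc _ ≤ |(1 - excessMass s q₁ q₂) * (∑ x ∈ s, q₁ x * f x - ∑ x ∈ s, q₂ x * f x)| := by
        rw [abs_mul]
        exact mul_le_mul_of_nonneg_right (le_abs_self _) (abs_nonneg _)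
    _ ≤ _ := by
      rw [one_sub_excessMass_mul_sub_eq hq, mul_add]
      refine (abs_sub _ _).trans (add_le_add (sum_sub_min_mul_abs_le hq₁ hq₂ _) ?_)
      rw [← excessMass_comm hq]
      exact sum_sub_min_mul_abs_le hq₂ hq₁ _

end WeightedSums

theorem one_sub_excessMass_mul_norm_sub_le {F : Type*} [NormedAddCommGroup F]
    [InnerProductSpace ℝ F] {s : Finset F} {q₁ q₂ : F → ℝ} (hq₁ : ∀ x ∈ s, 0 ≤ q₁ x)
    (hq₂ : ∀ x ∈ s, 0 ≤ q₂ x) (hq : ∑ x ∈ s, q₁ x = ∑ x ∈ s, q₂ x) {μ₁ μ₂ : F}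
    (hμ₁ : ∑ x ∈ s, q₁ x • x = μ₁) (hμ₂ : ∑ x ∈ s, q₂ x • x = μ₂) {C₁ C₂ : ℝ}
    (hC₁ : ∀ v : F, ‖v‖ = 1 → ∑ x ∈ s, q₁ x * ⟪v, x - μ₁⟫ ^ 2 ≤ C₁)
    (hC₂ : ∀ v : F, ‖v‖ = 1 → ∑ x ∈ s, q₂ x * ⟪v, x - μ₂⟫ ^ 2 ≤ C₂) :
    (1 - excessMass s q₁ q₂) * ‖μ₁ - μ₂‖ ≤ √(excessMass s q₁ q₂) * (√C₁ + √C₂) := by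
  rcases eq_or_ne μ₁ μ₂ with rfl | hne
  · rw [sub_self, norm_zero, mul_zero]
    positivity
  set v := ‖μ₁ - μ₂‖⁻¹ • (μ₁ - μ₂)
  have hv : ‖v‖ = 1 := norm_smul_inv_norm (sub_ne_zero.2 hne)
  have hvμ : ⟪v, μ₁ - μ₂⟫ = ‖μ₁ - μ₂‖ := by
    rw [real_inner_smul_left, real_inner_self_eq_norm_sq, sq, inv_mul_cancel_left₀]
    exact norm_ne_zero_iff.2 (sub_ne_zero.2 hne)
  have hmean : ∀ {q : F → ℝ} {μ : F}, ∑ x ∈ s, q x • x = μ → ∑ x ∈ s, q x * ⟪v, x⟫ = ⟪v, μ⟫ := by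
    rintro q μ rfl
    simp only [inner_sum, real_inner_smul_right]
  have key := one_sub_excessMass_mul_abs_sub_le hq₁ hq₂ hq (fun x => ⟪v, x⟫)
  simp only [hmean hμ₁, hmean hμ₂, ← inner_sub_right, hvμ, abs_norm] at key
  refine key.trans ?_
  gcongr
  exacts [hC₁ v hv, hC₂ v hv]

section TotalVariation

variable {E : Type*} [MeasurableSpace E] (P Q : Measure E) [IsFiniteMeasure P] [IsFiniteMeasure Q]

theorem abs_measureReal_sub_le_tvDist (t : Set E) : |P.real t - Q.real t| ≤ tvDist P Q := by
  refine le_ciSup (f := fun t => |(P t).toReal - (Q t).toReal|)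
    ⟨P.real .univ + Q.real .univ, ?_⟩ t
  rintro _ ⟨u, rfl⟩
  refine (abs_sub _ _).trans ?_
  rw [abs_of_nonneg ENNReal.toReal_nonneg, abs_of_nonneg ENNReal.toReal_nonneg]
  exact add_le_add (measureReal_mono (Set.subset_univ u)) (measureReal_mono (Set.subset_univ u))

theorem tvDist_nonneg : 0 ≤ tvDist P Q :=
  (abs_nonneg _).trans (abs_measureReal_sub_le_tvDist P Q ∅)

theorem excessMass_le_tvDist [MeasurableSingletonClass E] (s : Finset E) :
    excessMass s (fun x => P.real {x}) (fun x => Q.real {x}) ≤ tvDist P Q := by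
  classical
  have hsub_min : ∀ x, P.real {x} - min (P.real {x}) (Q.real {x}) =
      if Q.real {x} < P.real {x} then P.real {x} - Q.real {x} else 0 := by
    intro x
    split_ifs with h
    · rw [min_eq_right h.le]
    · rw [min_eq_left (not_lt.1 h), sub_self]
  calc excessMass s (fun x => P.real {x}) (fun x => Q.real {x})
      = P.real ↑(s.filter fun x => Q.real {x} < P.real {x}) -
          Q.real ↑(s.filter fun x => Q.real {x} < P.real {x}) := by
        simp only [excessMass, hsub_min, ← sum_filter, sum_sub_distrib, sum_measureReal_singleton]
    _ ≤ tvDist P Q := (le_abs_self _).trans (abs_measureReal_sub_le_tvDist P Q _)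

end TotalVariation

section FiniteSupport

variable {E : Type*} [MeasurableSpace E] [MeasurableSingletonClass E] {P : Measure E} {s : Finset E}

theorem integral_eq_sum_of_measure_compl_eq_zero [IsFiniteMeasure P] (hs : P (↑s)ᶜ = 0)
    {F : Type*} [NormedAddCommGroup F] [NormedSpace ℝ F] [CompleteSpace F] (f : E → F) :
    ∫ x, f x ∂P = ∑ x ∈ s, P.real {x} • f x := by
  rw [← setIntegral_finset s IntegrableOn.finset, Measure.restrict_eq_self_of_ae_mem]
  exact ae_iff.2 hs

theorem sum_measureReal_singleton_eq_one [IsProbabilityMeasure P] (hs : P (↑s)ᶜ = 0) :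
    ∑ x ∈ s, P.real {x} = 1 := by
  rw [sum_measureReal_singleton, measureReal_def, (prob_compl_eq_zero_iff s.measurableSet).1 hs,
    ENNReal.toReal_one]

end FiniteSupport

section Covariance

variable {n : Type*} [Fintype n] [DecidableEq n]

theorem sum_mul_inner_sub_sq_eq_inner_toEuclideanCLM {s : Finset (EuclideanSpace ℝ n)}
    {q : EuclideanSpace ℝ n → ℝ} {μ : EuclideanSpace ℝ n} {M : Matrix n n ℝ}
    (hM : ∀ a b, M a b = ∑ x ∈ s, q x * ((x a - μ a) * (x b - μ b))) (v : EuclideanSpace ℝ n) :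
    ∑ x ∈ s, q x * ⟪v, x - μ⟫ ^ 2 = ⟪v, Matrix.toEuclideanCLM (𝕜 := ℝ) M v⟫ := by
  rw [Matrix.inner_toEuclideanCLM]
  simp only [dotProduct, Matrix.mulVec, hM, PiLp.inner_apply,
    RCLike.inner_apply, conj_trivial, PiLp.sub_apply, sq, sum_mul, mul_sum]
  rw [sum_comm]
  refine sum_congr rfl fun a _ => ?_
  rw [sum_comm]
  refine sum_congr rfl fun b _ => sum_congr rfl fun x _ => ?_
  ring

theorem sum_measureReal_mul_inner_sub_sq_le {P : Measure (EuclideanSpace ℝ n)} [IsFiniteMeasure P]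
    {s : Finset (EuclideanSpace ℝ n)} (hs : P (↑s)ᶜ = 0) {μ : EuclideanSpace ℝ n}
    {M : Matrix n n ℝ} (hM : ∀ a b, M a b = ∫ x, (x a - μ a) * (x b - μ b) ∂P)
    {v : EuclideanSpace ℝ n} (hv : ‖v‖ = 1) :
    ∑ x ∈ s, P.real {x} * ⟪v, x - μ⟫ ^ 2 ≤ ‖Matrix.toEuclideanCLM (𝕜 := ℝ) M‖ := by
  rw [sum_mul_inner_sub_sq_eq_inner_toEuclideanCLM (M := M) fun a b => by
    rw [hM, integral_eq_sum_of_measure_compl_eq_zero hs]; simp only [smul_eq_mul]]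
  calc _ ≤ ‖v‖ * ‖Matrix.toEuclideanCLM (𝕜 := ℝ) M v‖ := real_inner_le_norm _ _
    _ ≤ ‖Matrix.toEuclideanCLM (𝕜 := ℝ) M‖ := by
      simpa [hv] using (Matrix.toEuclideanCLM (𝕜 := ℝ) M).le_opNorm v

end Covariance

/-- Mean control via total variation: if two finitely supported distributions are close
in TV, their means are close in `ℓ₂`, at a scale given by the spectral norms of their
covariances. -/
theorem mean_control_tv
    (p : ℕ)
    (P₁ P₂ : Measure (EuclideanSpace ℝ (Fin p)))
    [IsProbabilityMeasure P₁] [IsProbabilityMeasure P₂]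
    (hfin : ∃ s : Finset (EuclideanSpace ℝ (Fin p)),
      P₁ ((s : Set (EuclideanSpace ℝ (Fin p)))ᶜ) = 0 ∧
      P₂ ((s : Set (EuclideanSpace ℝ (Fin p)))ᶜ) = 0)
    (μ₁ μ₂ : EuclideanSpace ℝ (Fin p))
    (Cov₁ Cov₂ : Matrix (Fin p) (Fin p) ℝ)
    (hmean₁ : ∫ x, x ∂P₁ = μ₁) (hmean₂ : ∫ x, x ∂P₂ = μ₂)
    (hCov₁ : ∀ a b, Cov₁ a b = ∫ x, (x a - μ₁ a) * (x b - μ₁ b) ∂P₁)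
    (hCov₂ : ∀ a b, Cov₂ a b = ∫ x, (x a - μ₂ a) * (x b - μ₂ b) ∂P₂)
    (htv : tvDist P₁ P₂ < 1) :
    ‖μ₁ - μ₂‖ ≤
      (Real.sqrt (tvDist P₁ P₂) / (1 - Real.sqrt (tvDist P₁ P₂))) *
        (Real.sqrt ‖Matrix.toEuclideanCLM (𝕜 := ℝ) Cov₁‖ +
         Real.sqrt ‖Matrix.toEuclideanCLM (𝕜 := ℝ) Cov₂‖) := by
  obtain ⟨s, hs₁, hs₂⟩ := hfin
  set δ := tvDist P₁ P₂
  set ρ := excessMass s (fun x => P₁.real {x}) (fun x => P₂.real {x})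
  have hρδ : ρ ≤ δ := excessMass_le_tvDist P₁ P₂ s
  have hδ : 0 ≤ δ := tvDist_nonneg P₁ P₂
  have hsqrtδ : √δ < 1 := (Real.sqrt_lt' one_pos).2 (by rwa [one_pow])
  have hδsqrt : δ ≤ √δ := (Real.le_sqrt hδ hδ).2 (by nlinarith)
  have key := one_sub_excessMass_mul_norm_sub_le (s := s)
    (fun _ _ => measureReal_nonneg) (fun _ _ => measureReal_nonneg)
    (by rw [sum_measureReal_singleton_eq_one hs₁, sum_measureReal_singleton_eq_one hs₂])
    (hmean₁ ▸ (integral_eq_sum_of_measure_compl_eq_zero hs₁ id).symm)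
    (hmean₂ ▸ (integral_eq_sum_of_measure_compl_eq_zero hs₂ id).symm)
    (fun _ => sum_measureReal_mul_inner_sub_sq_le hs₁ hCov₁)
    (fun _ => sum_measureReal_mul_inner_sub_sq_le hs₂ hCov₂)
  rw [div_mul_eq_mul_div, le_div_iff₀ (sub_pos.2 hsqrtδ)]
  calc ‖μ₁ - μ₂‖ * (1 - √δ) ≤ (1 - ρ) * ‖μ₁ - μ₂‖ := by
        rw [mul_comm]
        gcongr
        linarith
    _ ≤ √ρ * _ := key
    _ ≤ √δ * _ := by gcongr
end

section
/- Let S be a finite set of n points in ℝ^p with sample mean θ_S and sample covariance Σ_S, and let G ⊆ S with |G| = n_G, sample mean θ_G and sample covariance Σ_G. Let v be the top unit-norm eigenvector of Σ_S and define scores τ_i = (v^T(x_i - θ_S))². If ‖Σ_S‖₂ > ((1+ψ)/(n/(n_G γ) - ψ)) ‖Σ_G‖₂, where ψ = (1/(√(n/(n-n_G)) - 1))² and ψ < n/(n_G γ), then Σ_{i: x_i ∈ G} τ_i < (1/γ) Σ_{j=1}^n τ_j. -/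
/-!
Write `f i = ⟪v, x i - θ_S⟫`, so that `∑ f = 0` and the total score is `n ‖Σ_S‖`. On `G`,
`f` is the `G`-deviation plus the mean shift `δ = ⟪v, θ_G - θ_S⟫`, so the score of `G` is
`n_G vᵀΣ_G v + n_G δ²`; the scores on the complement sum to `-n_G δ`, and Cauchy–Schwarz there
bounds the mean shift by the complement's score. Together this gives
`∑_{i ∈ G} f i ² ≤ n_G ‖Σ_G‖ + (n - n_G) ‖Σ_S‖`, and since `n - n_G < n_G ψ` the gap hypothesis
turns this into the claim.
-/

open MeasureTheory

noncomputable def sampleMean {n p : ℕ} (x : Fin n → EuclideanSpace ℝ (Fin p))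
    (w : Finset (Fin n)) : EuclideanSpace ℝ (Fin p) :=
  (w.card : ℝ)⁻¹ • ∑ i ∈ w, x i

noncomputable def sampleCov {n p : ℕ} (x : Fin n → EuclideanSpace ℝ (Fin p))
    (w : Finset (Fin n)) : Matrix (Fin p) (Fin p) ℝ :=
  Matrix.of fun a b =>
    (w.card : ℝ)⁻¹ * ∑ i ∈ w, (x i a - sampleMean x w a) * (x i b - sampleMean x w b)

open Finset
open scoped RealInnerProductSpace

lemma sum_sum_mul_mul_eq_inner_toEuclideanCLM {ι : Type*} [Fintype ι] [DecidableEq ι]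
    (M : Matrix ι ι ℝ) (v : EuclideanSpace ℝ ι) :
    ∑ a, ∑ b, v a * M a b * v b = ⟪v, Matrix.toEuclideanCLM (𝕜 := ℝ) M v⟫ := by
  simp [Matrix.inner_toEuclideanCLM, dotProduct, Matrix.mulVec, mul_sum, mul_assoc]

lemma sum_sum_mul_mul_le_norm_toEuclideanCLM {ι : Type*} [Fintype ι] [DecidableEq ι]
    (M : Matrix ι ι ℝ) {v : EuclideanSpace ℝ ι} (hv : ‖v‖ = 1) :
    ∑ a, ∑ b, v a * M a b * v b ≤ ‖Matrix.toEuclideanCLM (𝕜 := ℝ) M‖ := by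
  rw [sum_sum_mul_mul_eq_inner_toEuclideanCLM]
  calc ⟪v, Matrix.toEuclideanCLM (𝕜 := ℝ) M v⟫
      ≤ ‖v‖ * ‖Matrix.toEuclideanCLM (𝕜 := ℝ) M v‖ := real_inner_le_norm _ _
    _ ≤ ‖v‖ * (‖Matrix.toEuclideanCLM (𝕜 := ℝ) M‖ * ‖v‖) := by
      gcongr
      exact ContinuousLinearMap.le_opNorm _ _
    _ = ‖Matrix.toEuclideanCLM (𝕜 := ℝ) M‖ := by rw [hv, one_mul, mul_one]

section SampleStatistics

variable {n p : ℕ} (x : Fin n → EuclideanSpace ℝ (Fin p)) (v : EuclideanSpace ℝ (Fin p))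

lemma sum_sum_mul_sampleCov_mul (w : Finset (Fin n)) :
    ∑ a, ∑ b, v a * sampleCov x w a b * v b
      = (#w : ℝ)⁻¹ * ∑ i ∈ w, ⟪v, x i - sampleMean x w⟫ ^ 2 := by
  have hinner : ∀ i, ⟪v, x i - sampleMean x w⟫ = ∑ a, v a * (x i a - sampleMean x w a) := by
    simp [PiLp.inner_apply, mul_comm]
  simp_rw [hinner, sq, sum_mul_sum, mul_sum, sampleCov, Matrix.of_apply, mul_sum, sum_mul]
  conv_rhs => rw [sum_comm]; enter [2, a]; rw [sum_comm]
  exact sum_congr rfl fun a _ => sum_congr rfl fun b _ => sum_congr rfl fun i _ => by ring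

lemma sum_sub_sampleMean {w : Finset (Fin n)} (hw : w.Nonempty) :
    ∑ i ∈ w, (x i - sampleMean x w) = 0 := by
  rw [sum_sub_distrib, sum_const, sampleMean, ← Nat.cast_smul_eq_nsmul ℝ, smul_smul,
    mul_inv_cancel₀ (Nat.cast_ne_zero.2 hw.card_pos.ne'), one_smul, sub_self]

lemma inner_sub_eq_inner_sub_sampleMean_add (w : Finset (Fin n)) (c : EuclideanSpace ℝ (Fin p))
    (i : Fin n) :
    ⟪v, x i - c⟫ = ⟪v, x i - sampleMean x w⟫ + ⟪v, sampleMean x w - c⟫ := by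
  rw [← inner_add_right, sub_add_sub_cancel]

lemma sum_inner_sub_sampleMean {w : Finset (Fin n)} (hw : w.Nonempty) :
    ∑ i ∈ w, ⟪v, x i - sampleMean x w⟫ = 0 := by
  rw [← inner_sum, sum_sub_sampleMean x hw, inner_zero_right]

lemma sum_inner_sub {w : Finset (Fin n)} (hw : w.Nonempty) (c : EuclideanSpace ℝ (Fin p)) :
    ∑ i ∈ w, ⟪v, x i - c⟫ = #w * ⟪v, sampleMean x w - c⟫ := by
  simp_rw [inner_sub_eq_inner_sub_sampleMean_add x v w c, sum_add_distrib,
    sum_inner_sub_sampleMean x v hw, sum_const, nsmul_eq_mul, zero_add]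

lemma sum_inner_sub_sq {w : Finset (Fin n)} (hw : w.Nonempty) (c : EuclideanSpace ℝ (Fin p)) :
    ∑ i ∈ w, ⟪v, x i - c⟫ ^ 2
      = ∑ i ∈ w, ⟪v, x i - sampleMean x w⟫ ^ 2 + #w * ⟪v, sampleMean x w - c⟫ ^ 2 := by
  simp_rw [inner_sub_eq_inner_sub_sampleMean_add x v w c, add_sq, sum_add_distrib, ← sum_mul,
    ← mul_sum, sum_inner_sub_sampleMean x v hw, sum_const, nsmul_eq_mul]
  ring

lemma card_mul_sum_inner_sub_sampleMean_univ_sq_le {G : Finset (Fin n)} (hG : G.Nonempty) :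
    n * ∑ i ∈ G, ⟪v, x i - sampleMean x univ⟫ ^ 2
      ≤ n * ∑ i ∈ G, ⟪v, x i - sampleMean x G⟫ ^ 2
        + #Gᶜ * ∑ j, ⟪v, x j - sampleMean x univ⟫ ^ 2 := by
  set f := fun j => ⟪v, x j - sampleMean x univ⟫
  set δ := ⟪v, sampleMean x G - sampleMean x univ⟫
  have hV : 0 ≤ ∑ i ∈ G, ⟪v, x i - sampleMean x G⟫ ^ 2 := sum_nonneg fun _ _ => sq_nonneg _
  have hsum_compl : ∑ i ∈ Gᶜ, f i = -(#G * δ) := by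
    have hsum : ∑ j, f j = 0 := sum_inner_sub_sampleMean x v (hG.mono (subset_univ G))
    rw [← sum_add_sum_compl G f, sum_inner_sub x v hG] at hsum
    linarith
  have hCS : (#G * δ) ^ 2 ≤ #Gᶜ * ∑ i ∈ Gᶜ, f i ^ 2 := by
    simpa [hsum_compl] using sq_sum_le_card_mul_sum_sq (s := Gᶜ) (f := f)
  have hn : (n : ℝ) = #G + #Gᶜ := by
    exact_mod_cast ((card_add_card_compl G).trans (card_fin n)).symm
  rw [← sum_add_sum_compl G fun j => f j ^ 2, sum_inner_sub_sq x v hG, hn]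
  nlinarith [mul_nonneg (Nat.cast_nonneg (α := ℝ) #Gᶜ) hV]

lemma sum_inner_sub_sampleMean_sq {w : Finset (Fin n)} (hw : w.Nonempty) :
    ∑ i ∈ w, ⟪v, x i - sampleMean x w⟫ ^ 2 = #w * ∑ a, ∑ b, v a * sampleCov x w a b * v b := by
  rw [sum_sum_mul_sampleCov_mul, mul_inv_cancel_left₀ (Nat.cast_ne_zero.2 hw.card_pos.ne')]

lemma sum_inner_sub_sampleMean_univ_sq_le {G : Finset (Fin n)} (hG : G.Nonempty) :
    ∑ i ∈ G, ⟪v, x i - sampleMean x univ⟫ ^ 2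
      ≤ #G * ∑ a, ∑ b, v a * sampleCov x G a b * v b
        + #Gᶜ * ∑ a, ∑ b, v a * sampleCov x univ a b * v b := by
  have huniv : (univ : Finset (Fin n)).Nonempty := hG.mono (subset_univ G)
  have hn : (0 : ℝ) < n := by simpa using huniv.card_pos
  have hscore := card_mul_sum_inner_sub_sampleMean_univ_sq_le x v hG
  rw [sum_inner_sub_sampleMean_sq x v hG, sum_inner_sub_sampleMean_sq x v huniv, card_univ,
    Fintype.card_fin] at hscore
  refine le_of_mul_le_mul_left ?_ hn
  linear_combination hscore

end SampleStatistics

-- With `s = √(N / (N - m))` we have `(N - m) (s² - 1) = m`, and `(s - 1)² < s² - 1`.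
lemma sub_lt_mul_one_div_sqrt_div_sub_sub_one_sq {m N : ℝ} (hm : 0 < m) (hmN : m < N) :
    N - m < m * (1 / (√(N / (N - m)) - 1)) ^ 2 := by
  set s := √(N / (N - m))
  have hNm : 0 < N - m := sub_pos.2 hmN
  have hs2 : (N - m) * (s ^ 2 - 1) = m := by
    rw [Real.sq_sqrt (div_pos (hm.trans hmN) hNm).le]
    field_simp
    ring
  have hs1 : 1 < s := (Real.lt_sqrt zero_le_one).2 (by rw [one_pow, one_lt_div hNm]; linarith)
  rw [div_pow, one_pow, mul_one_div, lt_div_iff₀ (by nlinarith)]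
  nlinarith [mul_pos hNm (sub_pos.2 hs1)]

/-- If the spectral norm of the full sample covariance is large compared to that of the
covariance of the subset `G`, then the scores of the points in `G` (projections onto the
top eigenvector) account for less than a `1/γ` fraction of the total score. -/
theorem filtering_score_bound
    {n p : ℕ} (x : Fin n → EuclideanSpace ℝ (Fin p))
    (G : Finset (Fin n)) (γ : ℝ) (hγ : 1 < γ)
    (hG : 0 < G.card) (hGn : G.card < n)
    (v : EuclideanSpace ℝ (Fin p)) (hv : ‖v‖ = 1)
    (hev : (∑ a, ∑ b, v a * sampleCov x Finset.univ a b * v b) =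
      ‖Matrix.toEuclideanCLM (𝕜 := ℝ) (sampleCov x Finset.univ)‖)
    (hψ : (1 / (Real.sqrt ((n : ℝ) / ((n : ℝ) - G.card)) - 1)) ^ 2 <
      (n : ℝ) / (G.card * γ))
    (hgap : ((1 + (1 / (Real.sqrt ((n : ℝ) / ((n : ℝ) - G.card)) - 1)) ^ 2) /
        ((n : ℝ) / (G.card * γ) -
          (1 / (Real.sqrt ((n : ℝ) / ((n : ℝ) - G.card)) - 1)) ^ 2)) *
        ‖Matrix.toEuclideanCLM (𝕜 := ℝ) (sampleCov x G)‖ <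
      ‖Matrix.toEuclideanCLM (𝕜 := ℝ) (sampleCov x Finset.univ)‖) :
    (∑ i ∈ G, (inner ℝ v (x i - sampleMean x Finset.univ) : ℝ) ^ 2) <
      (1 / γ) * ∑ j, (inner ℝ v (x j - sampleMean x Finset.univ) : ℝ) ^ 2 := by
  set ψ := (1 / (√((n : ℝ) / (n - #G)) - 1)) ^ 2
  set σ := ‖Matrix.toEuclideanCLM (𝕜 := ℝ) (sampleCov x univ)‖
  set σG := ‖Matrix.toEuclideanCLM (𝕜 := ℝ) (sampleCov x G)‖
  set q := ∑ a, ∑ b, v a * sampleCov x G a b * v b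
  have hGne : G.Nonempty := card_pos.1 hG
  have hm : (0 : ℝ) < #G := by exact_mod_cast hG
  have hmn : (#G : ℝ) < n := by exact_mod_cast hGn
  have hγ0 : 0 < γ := zero_lt_one.trans hγ
  have hqσG : q ≤ (1 + ψ) * σG := (sum_sum_mul_mul_le_norm_toEuclideanCLM _ hv).trans
    (le_mul_of_one_le_left (norm_nonneg _) (le_add_of_nonneg_right (sq_nonneg _)))
  have hψm : (n - #G : ℝ) * σ * γ ≤ #G * ψ * σ * γ := by
    gcongr
    exact (sub_lt_mul_one_div_sqrt_div_sub_sub_one_sq hm hmn).le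
  have hgap' : (1 + ψ) * σG < (n / (#G * γ) - ψ) * σ := by
    rwa [div_mul_eq_mul_div, div_lt_iff₀ (sub_pos.2 hψ), mul_comm σ] at hgap
  have hscore : ∑ i ∈ G, ⟪v, x i - sampleMean x univ⟫ ^ 2 ≤ #G * q + (n - #G) * σ := by
    simpa [hev, card_compl, Nat.cast_sub hGn.le] using
      sum_inner_sub_sampleMean_univ_sq_le x v hGne
  rw [sum_inner_sub_sampleMean_sq x v (hGne.mono (subset_univ G)), card_univ, Fintype.card_fin,
    hev, one_div_mul_eq_div, lt_div_iff₀ hγ0]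
  calc _ ≤ (#G * q + (n - #G) * σ) * γ := by gcongr
    _ ≤ #G * γ * q + #G * γ * ψ * σ := by linarith
    _ ≤ #G * γ * ((1 + ψ) * σG) + #G * γ * ψ * σ := by gcongr
    _ < #G * γ * ((n / (#G * γ) - ψ) * σ) + #G * γ * ψ * σ := by gcongr
    _ = n * σ := by field_simp; ring
end
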